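/- Let n : ℕ and let sd(n) be the poset of nonempty finite subsets of Fin (n+1) ordered by inclusion, regarded as a category. The functor min : sd(n) ⥤ (Fin (n+1))ᵒᵖ admits a right adjoint sending j to the interval Finset.Ici j = {j, …, n} (i.e. j ≤ min S if and only if S ⊆ Ici j); this right adjoint is fully faithful; and consequently min exhibits (Fin (n+1))ᵒᵖ as the localization of sd(n) at the class of inclusions S ⊆ T with min S = min T, which is exactly the class of morphisms that min inverts. -/
import Mathlib


open CategoryTheory

/-- The subdivision `sd([n])`: the poset of nonempty finite subsets of `Fin (n+1)`,
ordered by inclusion, regarded as a category. -/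
abbrev Sd (n : ℕ) := {S : Finset (Fin (n + 1)) // S.Nonempty}

/-- The functor `min : sd([n]) ⥤ [n]ᵒᵖ` sending a nonempty subset to its minimum. -/
def sdMin (n : ℕ) : Sd n ⥤ (Fin (n + 1))ᵒᵖ where
  obj S := Opposite.op (S.1.min' S.2)
  map {S T} f := (homOfLE (Finset.min'_le T.1 (S.1.min' S.2)
      (by exact leOfHom f (S.1.min'_mem S.2)))).op
  map_id _ := rfl
  map_comp _ _ := rfl

/-- The functor `[n]ᵒᵖ ⥤ sd([n])` sending `j` to the interval `Ici j = {j, …, n}`. -/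
def sdIci (n : ℕ) : (Fin (n + 1))ᵒᵖ ⥤ Sd n where
  obj j := ⟨Finset.Ici j.unop, ⟨j.unop, Finset.mem_Ici.2 le_rfl⟩⟩
  map {j k} f := homOfLE (by exact Finset.Ici_subset_Ici.2 (leOfHom f.unop))
  map_id _ := rfl
  map_comp _ _ := rfl

/-- The class of inclusions `S ⊆ T` in `sd([n])` with `min S = min T`. -/
def sdWmin (n : ℕ) : MorphismProperty (Sd n) :=
  fun S T _ => S.1.min' S.2 = T.1.min' T.2


lemma sd_key (n : ℕ) (S : Sd n) (j : Fin (n + 1)) :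
    j ≤ S.1.min' S.2 ↔ S.1 ⊆ Finset.Ici j := by
  constructor
  · intro h x hx
    exact Finset.mem_Ici.2 (h.trans (Finset.min'_le _ _ hx))
  · intro h
    exact Finset.mem_Ici.1 (h (S.1.min'_mem S.2))

def sdAdj (n : ℕ) : sdMin n ⊣ sdIci n :=
  Adjunction.mkOfHomEquiv
    { homEquiv := fun S j =>
        { toFun := fun f => homOfLE ((sd_key n S j.unop).1 (leOfHom f.unop))
          invFun := fun g => (homOfLE ((sd_key n S j.unop).2 (leOfHom g))).op
          left_inv := fun _ => Subsingleton.elim _ _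
          right_inv := fun _ => Subsingleton.elim _ _ }
      homEquiv_naturality_left_symm := fun _ _ => Subsingleton.elim _ _
      homEquiv_naturality_right := fun _ _ => Subsingleton.elim _ _ }

instance sdIci_full (n : ℕ) : (sdIci n).Full where
  map_surjective {j k} f := by
    refine ⟨(homOfLE ?_).op, Subsingleton.elim _ _⟩
    exact Finset.mem_Ici.1 (leOfHom f (Finset.mem_Ici.2 le_rfl))

instance sdIci_faithful (n : ℕ) : (sdIci n).Faithful where
  map_injective _ := Subsingleton.elim _ _

lemma sdWmin_eq (n : ℕ) :
    sdWmin n = (MorphismProperty.isomorphisms _).inverseImage (sdMin n) := by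
  ext S T f
  constructor
  · intro h
    refine ⟨eqToHom (by simp [sdMin, h.symm]), Subsingleton.elim _ _, Subsingleton.elim _ _⟩
  · intro h
    have h' : IsIso ((sdMin n).map f) := h
    have := (inv ((sdMin n).map f)).unop.le
    have := ((sdMin n).map f).unop.le
    exact le_antisymm ‹_› ‹_›

instance sdMin_isLoc (n : ℕ) : (sdMin n).IsLocalization (sdWmin n) := by
  rw [sdWmin_eq]
  exact (sdAdj n).isLocalization

/-- `min : sd([n]) ⥤ [n]ᵒᵖ` admits a right adjoint `j ↦ Ici j` (indeed `j ≤ min S ↔ S ⊆ Ici j`),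
this right adjoint is fully faithful, and consequently `min` exhibits `[n]ᵒᵖ` as the localization
of `sd([n])` at the class of inclusions `S ⊆ T` with `min S = min T`, which is exactly the class
of morphisms inverted by `min`. -/
theorem sdMin_adjunction_isLocalization (n : ℕ) :
    (∀ (S : Sd n) (j : Fin (n + 1)), j ≤ S.1.min' S.2 ↔ S.1 ⊆ Finset.Ici j) ∧
    Nonempty (sdMin n ⊣ sdIci n) ∧
    (sdIci n).Full ∧ (sdIci n).Faithful ∧
    (sdMin n).IsLocalization (sdWmin n) ∧
    (∀ (S T : Sd n) (f : S ⟶ T), sdWmin n f ↔ IsIso ((sdMin n).map f)) := by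
  refine ⟨sd_key n, ⟨sdAdj n⟩, sdIci_full n, sdIci_faithful n, sdMin_isLoc n, fun S T f => ?_⟩
  rw [sdWmin_eq]
  exact Iff.rfl
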